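/- arXiv:2104.12094 — 4 statements merged into one kernel-verified Lean document; each statement's English description precedes it below -/
import Mathlib

section
/- Let d ≥ 2 and let ρ be a density matrix on ℂ^d. For every real number x with 0 ≤ x ≤ C_{l2}(ρ) and x ≤ (d−1)/d, the geometric measure of coherence satisfies C_g(ρ) ≥ ((d−1)/d) · (1 − √(1 − (d/(d−1)) · x)). (Theorem 1: any lower bound on the l2-norm of coherence yields a lower bound on the geometric measure of coherence.) -/
open Matrix BigOperators
open scoped ComplexOrder Classical

/-- The `l2`-norm of coherence: sum of squared moduli of off-diagonal entries. -/
noncomputable def Cl2 {d : ℕ} (ρ : Matrix (Fin d) (Fin d) ℂ) : ℝ :=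
  ∑ i, ∑ j, if i = j then 0 else ‖ρ i j‖ ^ 2

/-- A density matrix: positive semidefinite with trace 1. -/
def IsDensityMatrix {d : ℕ} (ρ : Matrix (Fin d) (Fin d) ℂ) : Prop :=
  ρ.PosSemidef ∧ ρ.trace = 1

/-- Positive semidefinite square root (junk value `0` for non-PSD matrices). -/
noncomputable def msqrt {d : ℕ} (ρ : Matrix (Fin d) (Fin d) ℂ) :
    Matrix (Fin d) (Fin d) ℂ :=
  if h : ρ.PosSemidef then
    (h.1.eigenvectorUnitary : Matrix (Fin d) (Fin d) ℂ) *
      diagonal ((↑) ∘ (√·) ∘ h.1.eigenvalues) *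
      (star h.1.eigenvectorUnitary : Matrix (Fin d) (Fin d) ℂ)
  else 0

/-- Fidelity `F(ρ,σ) = (tr √(√σ ρ √σ))²`. -/
noncomputable def fidelity {d : ℕ} (ρ σ : Matrix (Fin d) (Fin d) ℂ) : ℝ :=
  ((msqrt (msqrt σ * ρ * msqrt σ)).trace).re ^ 2

/-- The geometric measure of coherence:
`C_g(ρ) = 1 − sup {F(ρ,σ) : σ incoherent (diagonal) density matrix}`. -/
noncomputable def Cg {d : ℕ} (ρ : Matrix (Fin d) (Fin d) ℂ) : ℝ :=
  1 - sSup {x : ℝ | ∃ σ : Matrix (Fin d) (Fin d) ℂ,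
      IsDensityMatrix σ ∧ σ.IsDiag ∧ x = fidelity ρ σ}

namespace CoherAux

variable {d : ℕ}

open scoped MatrixOrder in
lemma msqrt_eq_sqrt {A : Matrix (Fin d) (Fin d) ℂ} (hA : A.PosSemidef) :
    msqrt A = CFC.sqrt A := by
  rw [msqrt, dif_pos hA, CFC.sqrt_eq_cfc, cfc_nnreal_eq_real _ A hA.nonneg, hA.1.cfc_eq]
  simp only [IsHermitian.cfc, Unitary.conjStarAlgAut_apply]
  congr 3
  funext i
  simp [hA.eigenvalues_nonneg i]

open scoped MatrixOrder in
lemma msqrt_psd {A : Matrix (Fin d) (Fin d) ℂ} (hA : A.PosSemidef) :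
    (msqrt A).PosSemidef := by
  rw [msqrt_eq_sqrt hA]
  exact (CFC.sqrt_nonneg A).posSemidef

open scoped MatrixOrder in
lemma msqrt_mul_self {A : Matrix (Fin d) (Fin d) ℂ} (hA : A.PosSemidef) :
    msqrt A * msqrt A = A := by
  rw [msqrt_eq_sqrt hA]
  exact CFC.sqrt_mul_sqrt_self A hA.nonneg

open scoped MatrixOrder in
lemma msqrt_unique {A D : Matrix (Fin d) (Fin d) ℂ} (hA : A.PosSemidef)
    (hD : D.PosSemidef) (h : D ^ 2 = A) : msqrt A = D := by
  rw [msqrt_eq_sqrt hA]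
  exact (CFC.sqrt_eq_iff A D hA.nonneg hD.nonneg).mpr (by rw [← h, pow_two])

/-- Second antisymmetric power of a matrix, padded with zeros on invalid pairs. -/
noncomputable def wedge (A : Matrix (Fin d) (Fin d) ℂ) :
    Matrix (Fin d × Fin d) (Fin d × Fin d) ℂ :=
  fun P Q => if P.1 < P.2 ∧ Q.1 < Q.2 then
      A P.1 Q.1 * A P.2 Q.2 - A P.1 Q.2 * A P.2 Q.1 else 0

lemma sum_lt_half (f : Fin d × Fin d → ℂ)
    (hsymm : ∀ k l, f (k, l) = f (l, k)) (hdiag : ∀ k, f (k, k) = 0) :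
    2 * ∑ P : Fin d × Fin d, (if P.1 < P.2 then f P else 0)
      = ∑ P : Fin d × Fin d, f P := by
  have h1 : ∑ P : Fin d × Fin d, (if P.1 < P.2 then f P else 0)
      = ∑ P : Fin d × Fin d, (if P.2 < P.1 then f P else 0) := by
    apply Fintype.sum_equiv (Equiv.prodComm (Fin d) (Fin d))
    intro ⟨k, l⟩
    simp only [Equiv.prodComm_apply, Prod.swap]
    rw [hsymm k l]
    rfl
  rw [two_mul]
  nth_rewrite 2 [h1]
  rw [← Finset.sum_add_distrib]
  apply Finset.sum_congr rfl
  intro ⟨k, l⟩ _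
  rcases lt_trichotomy k l with h | h | h
  · simp [h, not_lt.mpr h.le]
  · simp [h, hdiag]
  · simp [h, not_lt.mpr h.le]

lemma sum_lt_half_real (f : Fin d × Fin d → ℝ)
    (hsymm : ∀ k l, f (k, l) = f (l, k)) :
    2 * ∑ P : Fin d × Fin d, (if P.1 < P.2 then f P else 0)
      = ∑ P : Fin d × Fin d, f P - ∑ k : Fin d, f (k, k) := by
  have h1 : ∑ P : Fin d × Fin d, (if P.1 < P.2 then f P else 0)
      = ∑ P : Fin d × Fin d, (if P.2 < P.1 then f P else 0) := by
    apply Fintype.sum_equiv (Equiv.prodComm (Fin d) (Fin d))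
    intro ⟨k, l⟩
    simp only [Equiv.prodComm_apply, Prod.swap]
    rw [hsymm k l]
    rfl
  have hdiagsum : ∑ k : Fin d, f (k, k)
      = ∑ P : Fin d × Fin d, (if P.1 = P.2 then f P else 0) := by
    rw [Fintype.sum_prod_type]
    apply Finset.sum_congr rfl
    intro k _
    simp
  rw [two_mul]
  nth_rewrite 2 [h1]
  rw [hdiagsum, ← Finset.sum_add_distrib, eq_sub_iff_add_eq, ← Finset.sum_add_distrib]
  apply Finset.sum_congr rfl
  intro ⟨k, l⟩ _
  rcases lt_trichotomy k l with h | h | h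
  · simp [h, not_lt.mpr h.le, h.ne]
  · simp [h]
  · simp [h, not_lt.mpr h.le, h.ne']

lemma wedge_conjTranspose (A : Matrix (Fin d) (Fin d) ℂ) :
    (wedge A)ᴴ = wedge Aᴴ := by
  ext ⟨i, j⟩ ⟨k, l⟩
  show star (wedge A (k, l) (i, j)) = wedge Aᴴ (i, j) (k, l)
  simp only [wedge]
  by_cases h : i < j ∧ k < l
  · rw [if_pos ⟨h.2, h.1⟩, if_pos h]
    rw [star_sub, star_mul', star_mul']
    simp only [conjTranspose_apply]
    ring
  · rw [if_neg (by tauto), if_neg h, star_zero]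

lemma wedge_mul (A B : Matrix (Fin d) (Fin d) ℂ) :
    wedge (A * B) = wedge A * wedge B := by
  ext ⟨i, j⟩ ⟨m, n⟩
  rw [mul_apply]
  have key : ∑ K : Fin d × Fin d, wedge A (i, j) K * wedge B K (m, n)
      = if (i < j ∧ m < n) then
          ∑ K : Fin d × Fin d, (if K.1 < K.2 then
            (A i K.1 * A j K.2 - A i K.2 * A j K.1) *
            (B K.1 m * B K.2 n - B K.1 n * B K.2 m) else 0)
        else 0 := by
    by_cases h : i < j ∧ m < n
    · rw [if_pos h]
      apply Finset.sum_congr rfl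
      intro ⟨k, l⟩ _
      by_cases hk : k < l
      · simp [wedge, h.1, h.2, hk]
      · simp [wedge, hk]
    · rw [if_neg h]
      apply Finset.sum_eq_zero
      intro ⟨k, l⟩ _
      rcases not_and_or.mp h with h' | h'
      · simp [wedge, h']
      · simp [wedge, h']
  rw [key]
  have T1 : (A * B) i m * (A * B) j n
      = ∑ k, ∑ l, (A i k * B k m) * (A j l * B l n) := by
    rw [mul_apply, mul_apply, Finset.sum_mul_sum]
  have T2 : (A * B) i n * (A * B) j m
      = ∑ k, ∑ l, (A i k * B k n) * (A j l * B l m) := by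
    rw [mul_apply, mul_apply, Finset.sum_mul_sum]
  have T3 : (A * B) j m * (A * B) i n
      = ∑ k, ∑ l, (A j k * B k m) * (A i l * B l n) := by
    rw [mul_apply, mul_apply, Finset.sum_mul_sum]
  have T4 : (A * B) j n * (A * B) i m
      = ∑ k, ∑ l, (A j k * B k n) * (A i l * B l m) := by
    rw [mul_apply, mul_apply, Finset.sum_mul_sum]
  have hfull : ∑ K : Fin d × Fin d,
      (A i K.1 * A j K.2 - A i K.2 * A j K.1) *
      (B K.1 m * B K.2 n - B K.1 n * B K.2 m)
      = 2 * ((A * B) i m * (A * B) j n - (A * B) i n * (A * B) j m) := by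
    rw [Fintype.sum_prod_type]
    calc ∑ k, ∑ l, (A i k * A j l - A i l * A j k) * (B k m * B l n - B k n * B l m)
        = ∑ k, ∑ l, ((A i k * B k m) * (A j l * B l n) - (A i k * B k n) * (A j l * B l m)
          - (A j k * B k m) * (A i l * B l n) + (A j k * B k n) * (A i l * B l m)) := by
          apply Finset.sum_congr rfl; intro k _; apply Finset.sum_congr rfl; intro l _
          ring
      _ = (∑ k, ∑ l, (A i k * B k m) * (A j l * B l n))
          - (∑ k, ∑ l, (A i k * B k n) * (A j l * B l m))
          - (∑ k, ∑ l, (A j k * B k m) * (A i l * B l n))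
          + (∑ k, ∑ l, (A j k * B k n) * (A i l * B l m)) := by
          simp only [Finset.sum_sub_distrib, Finset.sum_add_distrib]
      _ = 2 * ((A * B) i m * (A * B) j n - (A * B) i n * (A * B) j m) := by
          rw [← T1, ← T2, ← T3, ← T4]; ring
  have h2 := sum_lt_half (fun K =>
      (A i K.1 * A j K.2 - A i K.2 * A j K.1) *
      (B K.1 m * B K.2 n - B K.1 n * B K.2 m))
    (by intro k l; dsimp only; ring) (by intro k; dsimp only; ring)
  by_cases h : i < j ∧ m < n
  · rw [if_pos h]
    have h3 := h2.trans hfull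
    have h4 := mul_left_cancel₀ (two_ne_zero (α := ℂ)) h3
    rw [h4]
    simp [wedge, h.1, h.2]
  · rw [if_neg h]
    simp only [wedge]
    rw [if_neg (by tauto)]

lemma wedge_posSemidef {A : Matrix (Fin d) (Fin d) ℂ} (hA : A.PosSemidef) :
    (wedge A).PosSemidef := by
  have hs : msqrt A * msqrt A = A := msqrt_mul_self hA
  have hherm : (msqrt A)ᴴ = msqrt A := (msqrt_psd hA).1
  have h : wedge A = (wedge (msqrt A))ᴴ * wedge (msqrt A) := by
    rw [wedge_conjTranspose, hherm, ← wedge_mul, hs]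
  rw [h]
  exact posSemidef_conjTranspose_mul_self _

lemma trace_wedge (A : Matrix (Fin d) (Fin d) ℂ) :
    2 * (wedge A).trace = A.trace ^ 2 - (A * A).trace := by
  have h0 : (wedge A).trace
      = ∑ P : Fin d × Fin d, (if P.1 < P.2 then
          A P.1 P.1 * A P.2 P.2 - A P.1 P.2 * A P.2 P.1 else 0) := by
    rw [Matrix.trace]
    apply Finset.sum_congr rfl
    intro P _
    simp only [Matrix.diag_apply, wedge, and_self]
  rw [h0, sum_lt_half _ (by intro k l; dsimp only; ring) (by intro k; dsimp only; ring)]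
  have h1 : A.trace ^ 2 = ∑ k, ∑ l, A k k * A l l := by
    rw [Matrix.trace, pow_two, Finset.sum_mul_sum]
    rfl
  have h2 : (A * A).trace = ∑ k, ∑ l, A k l * A l k := by
    rw [Matrix.trace]
    apply Finset.sum_congr rfl
    intro k _
    simp [Matrix.diag_apply, mul_apply]
  rw [h1, h2, Fintype.sum_prod_type, ← Finset.sum_sub_distrib]
  apply Finset.sum_congr rfl
  intro k _
  rw [← Finset.sum_sub_distrib]

lemma psd_diag_nonneg {ι : Type*} [Fintype ι] [DecidableEq ι]
    {X : Matrix ι ι ℂ} (hX : X.PosSemidef) (i : ι) :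
    0 ≤ (X i i).re ∧ (X i i).im = 0 := by
  have h := hX.diag_nonneg (i := i)
  rw [Complex.le_def] at h
  simp at h
  exact ⟨h.1, h.2.symm⟩

lemma herm_sq_diag {ι : Type*} [Fintype ι] [DecidableEq ι]
    {X : Matrix ι ι ℂ} (hX : X.IsHermitian) (P : ι) :
    ((X * X) P P).re = ∑ Q, Complex.normSq (X P Q) := by
  rw [mul_apply, Complex.re_sum]
  apply Finset.sum_congr rfl
  intro Q _
  have h1 : X Q P = starRingEnd ℂ (X P Q) := by
    conv_lhs => rw [← hX.eq]
    rfl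
  rw [h1, Complex.mul_conj]
  simp

/-- Cauchy–Schwarz bound for the trace of a Hermitian matrix whose squared diagonal
is dominated by a product. -/
lemma herm_trace_re_le {ι : Type*} [Fintype ι] [DecidableEq ι]
    {X : Matrix ι ι ℂ} (hX : X.IsHermitian) (t c : ι → ℝ)
    (ht : ∀ P, 0 ≤ t P) (hc : ∀ P, 0 ≤ c P)
    (hb : ∀ P, ((X * X) P P).re ≤ t P * c P) :
    (X.trace).re ≤ Real.sqrt (∑ P, t P) * Real.sqrt (∑ P, c P) := by
  have step1 : ∀ P, (X P P).re ≤ Real.sqrt (t P) * Real.sqrt (c P) := by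
    intro P
    have h1 : Complex.normSq (X P P) ≤ ((X * X) P P).re := by
      rw [herm_sq_diag hX P]
      exact Finset.single_le_sum (fun Q _ => Complex.normSq_nonneg _) (Finset.mem_univ P)
    have h2 : (X P P).re ^ 2 ≤ t P * c P := by
      calc (X P P).re ^ 2 ≤ Complex.normSq (X P P) := by
            rw [Complex.normSq_apply]; nlinarith [sq_nonneg (X P P).im]
        _ ≤ t P * c P := h1.trans (hb P)
    calc (X P P).re ≤ |(X P P).re| := le_abs_self _
      _ = Real.sqrt ((X P P).re ^ 2) := (Real.sqrt_sq_eq_abs _).symm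
      _ ≤ Real.sqrt (t P * c P) := Real.sqrt_le_sqrt h2
      _ = Real.sqrt (t P) * Real.sqrt (c P) := Real.sqrt_mul (ht P) _
  have htr : (X.trace).re = ∑ P, (X P P).re := by
    rw [Matrix.trace, Complex.re_sum]; rfl
  rw [htr]
  calc ∑ P, (X P P).re ≤ ∑ P, Real.sqrt (t P) * Real.sqrt (c P) :=
        Finset.sum_le_sum (fun P _ => step1 P)
    _ ≤ Real.sqrt (∑ P, t P) * Real.sqrt (∑ P, c P) := by
        have hnn : 0 ≤ ∑ P, Real.sqrt (t P) * Real.sqrt (c P) :=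
          Finset.sum_nonneg fun P _ =>
            mul_nonneg (Real.sqrt_nonneg _) (Real.sqrt_nonneg _)
        have hcs := Finset.sum_mul_sq_le_sq_mul_sq Finset.univ
          (fun P => Real.sqrt (t P)) (fun P => Real.sqrt (c P))
        simp only [Real.sq_sqrt (ht _), Real.sq_sqrt (hc _)] at hcs
        have h5 := Real.sqrt_le_sqrt hcs
        rw [Real.sqrt_sq hnn, Real.sqrt_mul (Finset.sum_nonneg fun P _ => ht P)] at h5
        exact h5

lemma herm_diag_real {A : Matrix (Fin d) (Fin d) ℂ} (hA : A.IsHermitian) (i : Fin d) :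
    A i i = ((A i i).re : ℂ) := by
  have h1 : A i i = starRingEnd ℂ (A i i) := by
    conv_lhs => rw [← hA.eq]
    rfl
  exact (Complex.conj_eq_iff_re.mp h1.symm).symm

/-- The superfidelity bound for a diagonal second argument. -/
lemma superfid {ρ σ : Matrix (Fin d) (Fin d) ℂ}
    (hρ : IsDensityMatrix ρ) (hσ : IsDensityMatrix σ) (hdg : σ.IsDiag) :
    fidelity ρ σ ≤ (∑ i, (σ i i).re * (ρ i i).re)
      + Real.sqrt (1 - ∑ i, (σ i i).re ^ 2) * Real.sqrt (1 - ((ρ * ρ).trace).re) := by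
  classical
  set q : Fin d → ℝ := fun i => (σ i i).re with hq
  set p : Fin d → ℝ := fun i => (ρ i i).re with hp
  have hq0 : ∀ i, 0 ≤ q i := fun i => (psd_diag_nonneg hσ.1 i).1
  have hσii : ∀ i, σ i i = (q i : ℂ) := fun i => herm_diag_real hσ.1.1 i
  have hρii : ∀ i, ρ i i = (p i : ℂ) := fun i => herm_diag_real hρ.1.1 i
  have hq1 : ∑ i, q i = 1 := by
    have := hσ.2
    rw [Matrix.trace] at this
    have h2 : ∑ i, σ i i = 1 := this
    have h3 := congrArg Complex.re h2
    rw [Complex.re_sum] at h3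
    simpa using h3
  -- the diagonal square root of σ
  set D : Matrix (Fin d) (Fin d) ℂ := diagonal (fun i => (Real.sqrt (q i) : ℂ)) with hD
  have hDpsd : D.PosSemidef :=
    PosSemidef.diagonal (fun i => Complex.zero_le_real.mpr (Real.sqrt_nonneg _))
  have hDherm : Dᴴ = D := hDpsd.1
  have hDsq : D ^ 2 = σ := by
    rw [pow_two, hD, diagonal_mul_diagonal]
    ext i j
    by_cases h : i = j
    · subst h
      rw [Matrix.diagonal_apply_eq, hσii i, ← Complex.ofReal_mul, Real.mul_self_sqrt (hq0 i)]
    · rw [Matrix.diagonal_apply_ne _ h]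
      exact (hdg h).symm
  have hmsσ : msqrt σ = D := by
    exact msqrt_unique hσ.1 hDpsd hDsq
  set M : Matrix (Fin d) (Fin d) ℂ := D * ρ * D with hM
  have hMpsd : M.PosSemidef := by
    have := hρ.1.mul_mul_conjTranspose_same D
    rwa [hDherm] at this
  have hfid : fidelity ρ σ = ((msqrt M).trace).re ^ 2 := by
    rw [fidelity, hmsσ, ← hM]
  set R : Matrix (Fin d) (Fin d) ℂ := msqrt M with hR
  have hRpsd : R.PosSemidef := msqrt_psd hMpsd
  have hRM : R * R = M := msqrt_mul_self hMpsd
  -- entries of M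
  have hMe : ∀ i j, M i j = (Real.sqrt (q i) : ℂ) * ρ i j * (Real.sqrt (q j) : ℂ) := by
    intro i j
    rw [hM, Matrix.mul_diagonal, Matrix.diagonal_mul]
  -- trace of M
  have htrM : (M.trace).re = ∑ i, q i * p i := by
    rw [Matrix.trace, Complex.re_sum]
    apply Finset.sum_congr rfl
    intro i _
    rw [Matrix.diag_apply, hMe i i, hρii i, ← Complex.ofReal_mul, ← Complex.ofReal_mul]
    rw [Complex.ofReal_re]
    have hr : Real.sqrt (q i) * p i * Real.sqrt (q i)
        = (Real.sqrt (q i) * Real.sqrt (q i)) * p i := by ring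
    rw [hr, Real.mul_self_sqrt (hq0 i)]
  -- the wedge of R
  set X : Matrix (Fin d × Fin d) (Fin d × Fin d) ℂ := wedge R with hX
  have hXherm : X.IsHermitian := by
    show Xᴴ = X
    rw [hX, wedge_conjTranspose, hRpsd.1]
  have hXX : X * X = wedge M := by rw [hX, ← wedge_mul, hRM]
  set c : Fin d × Fin d → ℝ := fun P => ((wedge ρ) P P).re with hc
  set t : Fin d × Fin d → ℝ := fun P => if P.1 < P.2 then q P.1 * q P.2 else 0 with ht
  have hwρpsd := wedge_posSemidef hρ.1
  have hc0 : ∀ P, 0 ≤ c P := fun P => (psd_diag_nonneg hwρpsd P).1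
  have ht0 : ∀ P, 0 ≤ t P := by
    intro P
    rw [ht]
    dsimp only
    split
    · exact mul_nonneg (hq0 _) (hq0 _)
    · exact le_refl 0
  have hdom : ∀ P, ((X * X) P P).re ≤ t P * c P := by
    intro P
    obtain ⟨i, j⟩ := P
    rw [hXX]
    by_cases hij : i < j
    · have hkey : wedge M (i, j) (i, j) = ((q i * q j : ℝ) : ℂ) * wedge ρ (i, j) (i, j) := by
        simp only [wedge, and_self, if_pos hij]
        rw [hMe i i, hMe j j, hMe i j, hMe j i]
        have e1 : (Real.sqrt (q i) : ℂ) * (Real.sqrt (q i) : ℂ) = ((q i : ℝ) : ℂ) := by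
          rw [← Complex.ofReal_mul, Real.mul_self_sqrt (hq0 i)]
        have e2 : (Real.sqrt (q j) : ℂ) * (Real.sqrt (q j) : ℂ) = ((q j : ℝ) : ℂ) := by
          rw [← Complex.ofReal_mul, Real.mul_self_sqrt (hq0 j)]
        push_cast
        linear_combination (ρ i i * ρ j j - ρ i j * ρ j i) *
          (((Real.sqrt (q i) : ℂ) * (Real.sqrt (q i) : ℂ)) * e2 + ((q j : ℝ) : ℂ) * e1)
      rw [hkey]
      have : (((q i * q j : ℝ) : ℂ) * wedge ρ (i, j) (i, j)).re
          = (q i * q j) * c (i, j) := by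
        rw [Complex.mul_re, Complex.ofReal_re, Complex.ofReal_im]
        simp [hc]
      rw [this, ht]
      simp only [if_pos hij]
      exact le_refl _
    · have hzero : wedge M (i, j) (i, j) = 0 := by
        simp only [wedge]
        rw [if_neg (by tauto)]
      rw [hzero]
      simp only [Complex.zero_re, ht]
      rw [if_neg hij]
      simp
  have hmain := herm_trace_re_le hXherm t c ht0 hc0 hdom
  -- sum of t
  have hsum_t : ∑ P, t P = (1 - ∑ i, q i ^ 2) / 2 := by
    have h2 := sum_lt_half_real (fun P => q P.1 * q P.2)
      (by intro k l; dsimp only; ring)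
    have hful : ∑ P : Fin d × Fin d, q P.1 * q P.2 = 1 := by
      rw [Fintype.sum_prod_type]
      rw [← Finset.sum_mul_sum Finset.univ Finset.univ q q, hq1, mul_one]
    have hdg2 : ∑ k : Fin d, q k * q k = ∑ i, q i ^ 2 := by
      apply Finset.sum_congr rfl
      intro k _
      ring
    rw [hful, hdg2] at h2
    have hform : ∑ P, t P
        = ∑ P : Fin d × Fin d, (if P.1 < P.2 then q P.1 * q P.2 else 0) := rfl
    rw [hform]
    linarith
  -- sum of c
  have hsum_c : ∑ P, c P = (1 - ((ρ * ρ).trace).re) / 2 := by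
    have h3 := trace_wedge ρ
    rw [hρ.2, one_pow] at h3
    have h4 := congrArg Complex.re h3
    have h5 : (2 * (wedge ρ).trace).re = 2 * ((wedge ρ).trace).re := by
      rw [Complex.mul_re]
      norm_num
    have h6 : ((1 : ℂ) - (ρ * ρ).trace).re = 1 - ((ρ * ρ).trace).re := by
      rw [Complex.sub_re]
      norm_num
    rw [h5, h6] at h4
    have h7 : ((wedge ρ).trace).re = ∑ P, c P := by
      rw [Matrix.trace, Complex.re_sum]
      rfl
    rw [h7] at h4
    linarith
  -- fidelity identity
  have hRim : (R.trace).im = 0 := by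
    rw [Matrix.trace, Complex.im_sum]
    apply Finset.sum_eq_zero
    intro i _
    exact (psd_diag_nonneg hRpsd i).2
  have hiden : fidelity ρ σ = (M.trace).re + 2 * (X.trace).re := by
    rw [hfid]
    have h5 := trace_wedge R
    rw [hRM] at h5
    have h6 := congrArg Complex.re h5
    rw [Complex.mul_re, Complex.sub_re, pow_two, Complex.mul_re, hRim] at h6
    norm_num at h6
    have h8 : (X.trace) = (wedge R).trace := rfl
    rw [h8]
    nlinarith [h6]
  rw [hiden, htrM]
  have hA0 : 0 ≤ 1 - ∑ i, q i ^ 2 := by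
    have := Finset.sum_nonneg (fun P (_ : P ∈ Finset.univ) => ht0 P)
    rw [hsum_t] at this
    linarith
  have hB0 : 0 ≤ 1 - ((ρ * ρ).trace).re := by
    have := Finset.sum_nonneg (fun P (_ : P ∈ Finset.univ) => hc0 P)
    rw [hsum_c] at this
    linarith
  have hfinal : 2 * ((X.trace).re)
      ≤ Real.sqrt (1 - ∑ i, q i ^ 2) * Real.sqrt (1 - ((ρ * ρ).trace).re) := by
    rw [hsum_t, hsum_c] at hmain
    have key : Real.sqrt ((1 - ∑ i, q i ^ 2) / 2) * Real.sqrt ((1 - ((ρ * ρ).trace).re) / 2)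
        = Real.sqrt (1 - ∑ i, q i ^ 2) * Real.sqrt (1 - ((ρ * ρ).trace).re) / 2 := by
      rw [← Real.sqrt_mul (by linarith : (0:ℝ) ≤ (1 - ∑ i, q i ^ 2) / 2),
          ← Real.sqrt_mul hA0]
      have harg : (1 - ∑ i, q i ^ 2) / 2 * ((1 - ((ρ * ρ).trace).re) / 2)
          = ((1 - ∑ i, q i ^ 2) * (1 - ((ρ * ρ).trace).re)) * (1 / 4) := by ring
      rw [harg, Real.sqrt_mul (by positivity), show Real.sqrt (1/4) = 1/2 by
        rw [show (1/4 : ℝ) = (1/2)^2 by norm_num, Real.sqrt_sq (by norm_num)]]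
      ring
    rw [key] at hmain
    linarith
  linarith


lemma trace_sq_re_eq {ρ : Matrix (Fin d) (Fin d) ℂ} (hρ : ρ.IsHermitian) :
    ((ρ * ρ).trace).re = (∑ i, (ρ i i).re ^ 2) + Cl2 ρ := by
  have h1 : ((ρ * ρ).trace).re = ∑ i, ∑ j, Complex.normSq (ρ i j) := by
    rw [Matrix.trace, Complex.re_sum]
    apply Finset.sum_congr rfl
    intro i _
    exact herm_sq_diag hρ i
  rw [h1, Cl2, ← Finset.sum_add_distrib]
  apply Finset.sum_congr rfl
  intro i _
  have h2 : ∀ j, Complex.normSq (ρ i j)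
      = (if i = j then (ρ i i).re ^ 2 else 0)
        + (if i = j then 0 else ‖ρ i j‖ ^ 2) := by
    intro j
    by_cases h : i = j
    · subst h
      simp only [if_pos rfl, add_zero]
      rw [herm_diag_real hρ i]
      simp [Complex.normSq_apply]
      ring
    · simp only [if_neg h, zero_add]
      rw [Complex.sq_norm]
  rw [Finset.sum_congr rfl (fun j _ => h2 j), Finset.sum_add_distrib]
  congr 1
  rw [Finset.sum_ite_eq Finset.univ i (fun _ => (ρ i i).re ^ 2)]
  simp

lemma T2_le_one {ρ : Matrix (Fin d) (Fin d) ℂ} (hρ : IsDensityMatrix ρ) :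
    ((ρ * ρ).trace).re ≤ 1 := by
  have h3 := trace_wedge ρ
  rw [hρ.2, one_pow] at h3
  have h4 := congrArg Complex.re h3
  have h5 : (2 * (wedge ρ).trace).re = 2 * ((wedge ρ).trace).re := by
    rw [Complex.mul_re]; norm_num
  have h6 : ((1 : ℂ) - (ρ * ρ).trace).re = 1 - ((ρ * ρ).trace).re := by
    rw [Complex.sub_re]; norm_num
  rw [h5, h6] at h4
  have h7 : 0 ≤ ((wedge ρ).trace).re := by
    rw [Matrix.trace, Complex.re_sum]
    apply Finset.sum_nonneg
    intro P _
    exact (psd_diag_nonneg (wedge_posSemidef hρ.1) P).1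
  linarith

/-- Signed Cauchy–Schwarz for sums. -/
lemma sum_le_sqrt_mul_sqrt (f g : Fin d → ℝ) :
    ∑ i, f i * g i ≤ Real.sqrt (∑ i, f i ^ 2) * Real.sqrt (∑ i, g i ^ 2) := by
  have hcs := Finset.sum_mul_sq_le_sq_mul_sq Finset.univ f g
  calc ∑ i, f i * g i ≤ |∑ i, f i * g i| := le_abs_self _
    _ = Real.sqrt ((∑ i, f i * g i) ^ 2) := (Real.sqrt_sq_eq_abs _).symm
    _ ≤ Real.sqrt ((∑ i, f i ^ 2) * ∑ i, g i ^ 2) := Real.sqrt_le_sqrt hcs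
    _ = _ := Real.sqrt_mul (Finset.sum_nonneg fun i _ => sq_nonneg _) _

/-- Two-dimensional Cauchy–Schwarz in square-root form. -/
lemma sqrt_cs2 {a b c e : ℝ} (ha : 0 ≤ a) (hb : 0 ≤ b) (hc : 0 ≤ c) (he : 0 ≤ e) :
    Real.sqrt a * Real.sqrt c + Real.sqrt b * Real.sqrt e
      ≤ Real.sqrt (a + b) * Real.sqrt (c + e) := by
  have h1 : (Real.sqrt a * Real.sqrt c + Real.sqrt b * Real.sqrt e) ^ 2
      ≤ (a + b) * (c + e) := by
    have hsa := Real.sq_sqrt ha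
    have hsb := Real.sq_sqrt hb
    have hsc := Real.sq_sqrt hc
    have hse := Real.sq_sqrt he
    nlinarith [sq_nonneg (Real.sqrt a * Real.sqrt e - Real.sqrt b * Real.sqrt c),
      Real.sqrt_nonneg a, Real.sqrt_nonneg b, Real.sqrt_nonneg c, Real.sqrt_nonneg e]
  have h2 : 0 ≤ Real.sqrt a * Real.sqrt c + Real.sqrt b * Real.sqrt e := by positivity
  calc Real.sqrt a * Real.sqrt c + Real.sqrt b * Real.sqrt e
      = Real.sqrt ((Real.sqrt a * Real.sqrt c + Real.sqrt b * Real.sqrt e) ^ 2) :=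
        (Real.sqrt_sq h2).symm
    _ ≤ Real.sqrt ((a + b) * (c + e)) := Real.sqrt_le_sqrt h1
    _ = _ := Real.sqrt_mul (by linarith) _

/-- The scalar endgame. -/
lemma scalar_final (d : ℕ) (hd : 2 ≤ d) (p q : Fin d → ℝ)
    (hp0 : ∀ i, 0 ≤ p i) (hq0 : ∀ i, 0 ≤ q i)
    (hp1 : ∑ i, p i = 1) (hq1 : ∑ i, q i = 1)
    (C x : ℝ) (hx0 : 0 ≤ x) (hxC : x ≤ C) (hxd : x ≤ 1 - 1 / d)
    (hT2 : (∑ i, p i ^ 2) + C ≤ 1) :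
    (∑ i, q i * p i) + Real.sqrt (1 - ∑ i, q i ^ 2) *
        Real.sqrt (1 - ((∑ i, p i ^ 2) + C))
      ≤ 1 / d + Real.sqrt (1 - 1 / d - x) * Real.sqrt (1 - 1 / d) := by
  have hd0 : (0 : ℝ) < d := by positivity
  set P2 := ∑ i, p i ^ 2 with hP2
  set Q2 := ∑ i, q i ^ 2 with hQ2
  have hcard : (Finset.univ : Finset (Fin d)).card = d := by simp
  -- centered sums
  have hcp : ∑ i, (p i - 1 / d) ^ 2 = P2 - 1 / d := by
    have : ∀ i, (p i - 1 / d) ^ 2 = p i ^ 2 - (2 / d) * p i + (1 / d) ^ 2 := by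
      intro i; field_simp; ring
    rw [Finset.sum_congr rfl fun i _ => this i]
    rw [Finset.sum_add_distrib, Finset.sum_sub_distrib, ← Finset.mul_sum, hp1,
      Finset.sum_const, hcard, nsmul_eq_mul]
    field_simp
    ring
  have hcq : ∑ i, (q i - 1 / d) ^ 2 = Q2 - 1 / d := by
    have : ∀ i, (q i - 1 / d) ^ 2 = q i ^ 2 - (2 / d) * q i + (1 / d) ^ 2 := by
      intro i; field_simp; ring
    rw [Finset.sum_congr rfl fun i _ => this i]
    rw [Finset.sum_add_distrib, Finset.sum_sub_distrib, ← Finset.mul_sum, hq1,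
      Finset.sum_const, hcard, nsmul_eq_mul]
    field_simp
    ring
  have hP2d : 1 / d ≤ P2 := by
    have := Finset.sum_nonneg (fun i (_ : i ∈ Finset.univ) => sq_nonneg (p i - 1 / d))
    rw [hcp] at this; linarith
  have hQ2d : 1 / d ≤ Q2 := by
    have := Finset.sum_nonneg (fun i (_ : i ∈ Finset.univ) => sq_nonneg (q i - 1 / d))
    rw [hcq] at this; linarith
  have hQ21 : Q2 ≤ 1 := by
    have h1 : ∀ i, q i ^ 2 ≤ q i * 1 := by
      intro i
      have : q i ≤ 1 := by
        have := Finset.single_le_sum (fun j (_ : j ∈ Finset.univ) => hq0 j)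
          (Finset.mem_univ i)
        linarith
      nlinarith [hq0 i]
    have := Finset.sum_le_sum (fun i (_ : i ∈ Finset.univ) => h1 i)
    simp only [mul_one] at this
    rw [hq1] at this
    exact this
  -- step 1 : bound the overlap
  have hs : ∑ i, q i * p i ≤ 1 / d +
      Real.sqrt (P2 - 1 / d) * Real.sqrt (Q2 - 1 / d) := by
    have hcent : ∑ i, (p i - 1 / d) * (q i - 1 / d) = (∑ i, q i * p i) - 1 / d := by
      have : ∀ i, (p i - 1 / d) * (q i - 1 / d)
          = q i * p i - (1 / d) * p i - (1 / d) * q i + (1 / d) ^ 2 := by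
        intro i; ring
      rw [Finset.sum_congr rfl fun i _ => this i]
      rw [Finset.sum_add_distrib, Finset.sum_sub_distrib, Finset.sum_sub_distrib,
        ← Finset.mul_sum, ← Finset.mul_sum, hp1, hq1, Finset.sum_const, hcard,
        nsmul_eq_mul]
      field_simp
      ring
    have hcs := sum_le_sqrt_mul_sqrt (fun i => p i - 1 / d) (fun i => q i - 1 / d)
    rw [hcent, hcp, hcq] at hcs
    linarith
  -- step 2 : monotonicity in the coherence
  have hmono : Real.sqrt (1 - (P2 + C)) ≤ Real.sqrt (1 - P2 - x) := by
    apply Real.sqrt_le_sqrt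
    linarith
  have hsq2 : Real.sqrt (1 - Q2) * Real.sqrt (1 - (P2 + C))
      ≤ Real.sqrt (1 - P2 - x) * Real.sqrt (1 - Q2) := by
    rw [mul_comm]
    exact mul_le_mul_of_nonneg_right hmono (Real.sqrt_nonneg _)
  -- step 3 : the 2d Cauchy-Schwarz
  have hfin : Real.sqrt (P2 - 1 / d) * Real.sqrt (Q2 - 1 / d)
      + Real.sqrt (1 - P2 - x) * Real.sqrt (1 - Q2)
      ≤ Real.sqrt (1 - 1 / d - x) * Real.sqrt (1 - 1 / d) := by
    have h := sqrt_cs2 (a := P2 - 1 / d) (b := 1 - P2 - x) (c := Q2 - 1 / d)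
      (e := 1 - Q2) (by linarith) (by linarith) (by linarith) (by linarith)
    have e1 : P2 - 1 / d + (1 - P2 - x) = 1 - 1 / d - x := by ring
    have e2 : Q2 - 1 / d + (1 - Q2) = 1 - 1 / d := by ring
    rw [e1, e2] at h
    exact h
  calc (∑ i, q i * p i) + Real.sqrt (1 - Q2) * Real.sqrt (1 - (P2 + C))
      ≤ (1 / d + Real.sqrt (P2 - 1 / d) * Real.sqrt (Q2 - 1 / d))
        + Real.sqrt (1 - P2 - x) * Real.sqrt (1 - Q2) := by
        exact add_le_add hs hsq2
    _ ≤ 1 / d + Real.sqrt (1 - 1 / d - x) * Real.sqrt (1 - 1 / d) := by linarith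

end CoherAux

/-- Theorem 1: any lower bound `x` on the `l2`-norm of coherence yields a lower
bound `((d−1)/d)·(1 − √(1 − (d/(d−1))·x))` on the geometric measure of coherence. -/
theorem geometric_coherence_lower_bound (d : ℕ) (hd : 2 ≤ d)
    (ρ : Matrix (Fin d) (Fin d) ℂ) (hρ : IsDensityMatrix ρ)
    (x : ℝ) (hx0 : 0 ≤ x) (hxC : x ≤ Cl2 ρ) (hxd : x ≤ ((d : ℝ) - 1) / d) :
    ((d : ℝ) - 1) / d * (1 - Real.sqrt (1 - (d : ℝ) / ((d : ℝ) - 1) * x)) ≤ Cg ρ := by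
  classical
  have hd0 : (0 : ℝ) < d := by positivity
  have hd1 : (1 : ℝ) ≤ (d : ℝ) - 1 := by
    have : (2 : ℝ) ≤ d := by exact_mod_cast hd
    linarith
  have hdK : ((d : ℝ) - 1) / d = 1 - 1 / d := by field_simp
  have hxd' : x ≤ 1 - 1 / d := by rw [← hdK]; exact hxd
  set B : ℝ := 1 / d + Real.sqrt (1 - 1 / d - x) * Real.sqrt (1 - 1 / d) with hB
  -- every element of the set is at most B
  have hub : ∀ y ∈ {y : ℝ | ∃ σ : Matrix (Fin d) (Fin d) ℂ,
      IsDensityMatrix σ ∧ σ.IsDiag ∧ y = fidelity ρ σ}, y ≤ B := by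
    rintro y ⟨σ, hσ, hdg, rfl⟩
    have h1 := CoherAux.superfid hρ hσ hdg
    have h2 := CoherAux.trace_sq_re_eq hρ.1.1
    have h3 := CoherAux.T2_le_one hρ
    set p : Fin d → ℝ := fun i => (ρ i i).re with hp
    set q : Fin d → ℝ := fun i => (σ i i).re with hq
    have hp0 : ∀ i, 0 ≤ p i := fun i => (CoherAux.psd_diag_nonneg hρ.1 i).1
    have hq0 : ∀ i, 0 ≤ q i := fun i => (CoherAux.psd_diag_nonneg hσ.1 i).1
    have hp1 : ∑ i, p i = 1 := by
      have h4 := congrArg Complex.re hρ.2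
      rw [Matrix.trace, Complex.re_sum] at h4
      simpa using h4
    have hq1 : ∑ i, q i = 1 := by
      have h4 := congrArg Complex.re hσ.2
      rw [Matrix.trace, Complex.re_sum] at h4
      simpa using h4
    have h5 := CoherAux.scalar_final d hd p q hp0 hq0 hp1 hq1 (Cl2 ρ) x hx0 hxC hxd'
      (by rw [← h2]; exact h3)
    rw [h2] at h1
    calc fidelity ρ σ ≤ (∑ i, q i * p i) + Real.sqrt (1 - ∑ i, q i ^ 2) *
          Real.sqrt (1 - ((∑ i, p i ^ 2) + Cl2 ρ)) := h1
      _ ≤ B := h5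
  have hBnn : 0 ≤ B := by
    have : (0:ℝ) ≤ 1 / d := by positivity
    have := Real.sqrt_nonneg (1 - 1 / d - x)
    have := Real.sqrt_nonneg (1 - 1 / d)
    rw [hB]
    positivity
  have hsup : sSup {y : ℝ | ∃ σ : Matrix (Fin d) (Fin d) ℂ,
      IsDensityMatrix σ ∧ σ.IsDiag ∧ y = fidelity ρ σ} ≤ B :=
    Real.sSup_le hub hBnn
  -- identify the bound
  have hKnn : (0 : ℝ) ≤ ((d : ℝ) - 1) / d := by positivity
  have hBid : ((d : ℝ) - 1) / d * (1 - Real.sqrt (1 - (d : ℝ) / ((d : ℝ) - 1) * x))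
      = 1 - B := by
    have hK : ((d : ℝ) - 1) / d * Real.sqrt (1 - (d : ℝ) / ((d : ℝ) - 1) * x)
        = Real.sqrt (1 - 1 / d - x) * Real.sqrt (1 - 1 / d) := by
      rw [← Real.sqrt_mul (by linarith : (0:ℝ) ≤ 1 - 1/d - x)]
      rw [← Real.sqrt_sq hKnn]
      rw [← Real.sqrt_mul (sq_nonneg _)]
      congr 1
      have hne : (d : ℝ) - 1 ≠ 0 := by linarith
      have hne2 : (d : ℝ) ≠ 0 := by linarith
      field_simp
    rw [hB, mul_sub, mul_one, hK, hdK]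
    ring
  rw [Cg] at *
  rw [hBid]
  linarith
end

section
/- Fix a real number x > 0. For all real numbers d, d' with 2 ≤ d ≤ d' and x ≤ (d−1)/d, one has ((d'−1)/d') · (1 − √(1 − (d'/(d'−1)) · x)) ≤ ((d−1)/d) · (1 − √(1 − (d/(d−1)) · x)); that is, the estimated lower bound on the geometric measure of coherence G(d, x) = ((d−1)/d) · (1 − √(1 − (d/(d−1)) · x)) is monotonically decreasing in the dimension parameter d. -/
lemma G_aux (x a a' : ℝ) (hx : 0 < x) (hxa : x ≤ a) (haa' : a ≤ a') :
    a' - Real.sqrt (a' * (a' - x)) ≤ a - Real.sqrt (a * (a - x)) := by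
  have ha : 0 < a := lt_of_lt_of_le hx hxa
  have ha' : 0 < a' := lt_of_lt_of_le ha haa'
  set S := Real.sqrt (a * (a - x)) with hS
  set S' := Real.sqrt (a' * (a' - x)) with hS'
  have hS0 : 0 ≤ S := Real.sqrt_nonneg _
  have hS'0 : 0 ≤ S' := Real.sqrt_nonneg _
  have hSsq : S ^ 2 = a * (a - x) := Real.sq_sqrt (by nlinarith)
  have hS'sq : S' ^ 2 = a' * (a' - x) := Real.sq_sqrt (by nlinarith)
  have h1 : S ≤ a - x / 2 := by nlinarith [hSsq, sq_nonneg x]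
  have h2 : S' ≤ a' - x / 2 := by nlinarith [hS'sq, sq_nonneg x]
  by_cases hz : S' = 0
  · have hax : a' = x := by nlinarith [hS'sq]
    have hax2 : a = x := le_antisymm (by linarith) hxa
    have hSz : S = 0 := by nlinarith [hSsq]
    rw [hz, hSz, hax, hax2]
  · have hS'pos : 0 < S' := lt_of_le_of_ne hS'0 (Ne.symm hz)
    have hsum : 0 < S + S' := by linarith
    have key : (a' - a) * (S + S') ≤ (S' - S) * (S + S') := by nlinarith
    have := le_of_mul_le_mul_right key hsum
    linarith

lemma G_rw (x b : ℝ) (hb : 2 ≤ b) :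
    (b - 1) / b * (1 - Real.sqrt (1 - b / (b - 1) * x)) =
      (b - 1) / b - Real.sqrt ((b - 1) / b * ((b - 1) / b - x)) := by
  have hb0 : (0:ℝ) < b := by linarith
  have hb1 : (0:ℝ) < b - 1 := by linarith
  have ha : (0:ℝ) < (b - 1) / b := by positivity
  have h1 : 1 - b / (b - 1) * x = ((b - 1) / b - x) / ((b - 1) / b) := by
    field_simp
  rw [h1, mul_sub, mul_one]
  congr 1
  rw [show (b - 1) / b * ((b - 1) / b - x) =
      ((b - 1) / b) ^ 2 * (((b - 1) / b - x) / ((b - 1) / b)) by field_simp,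
    Real.sqrt_mul (sq_nonneg _), Real.sqrt_sq ha.le]

/-- For fixed `x > 0`, the estimated lower bound on the geometric measure of coherence
`G(d, x) = ((d−1)/d)·(1 − √(1 − (d/(d−1))·x))` is monotonically decreasing in the
dimension parameter `d ≥ 2`. -/
theorem G_antitone_in_dimension (x : ℝ) (hx : 0 < x) (d d' : ℝ)
    (hd : 2 ≤ d) (hdd' : d ≤ d') (hxd : x ≤ (d - 1) / d) :
    (d' - 1) / d' * (1 - Real.sqrt (1 - d' / (d' - 1) * x)) ≤
      (d - 1) / d * (1 - Real.sqrt (1 - d / (d - 1) * x)) := by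
  have hd0 : (0:ℝ) < d := by linarith
  have hd'0 : (0:ℝ) < d' := by linarith
  have haa' : (d - 1) / d ≤ (d' - 1) / d' := by
    rw [div_le_div_iff₀ hd0 hd'0]; nlinarith
  rw [G_rw x d hd, G_rw x d' (by linarith)]
  exact G_aux x ((d - 1) / d) ((d' - 1) / d') hx hxd haa'
end

section
/- Let d ≥ 2, let ψ ∈ ℂ^d be the GHZ-type unit vector with ψ_0 = ψ_{d−1} = 1/√2 and all other entries 0, let 0 ≤ η ≤ 1, and let ρ_η = (1−η)·ψψ† + (η/d)·I be the noisy GHZ state. Then C_{l2}(ρ_η) = (1−η)²/2, and consequently √(2·C_{l2}(ρ_η)) = C_{l1}(ρ_η); i.e., the spectrum-estimation lower bound √(2·C_{l2}) for the l1-norm of coherence is tight for noisy GHZ states. -/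
open Matrix BigOperators
open scoped ComplexOrder Classical

/-- The `l1`-norm of coherence: sum of moduli of off-diagonal entries. -/
noncomputable def Cl1 {d : ℕ} (ρ : Matrix (Fin d) (Fin d) ℂ) : ℝ :=
  ∑ i, ∑ j, if i = j then 0 else ‖ρ i j‖

/-!
Adding a multiple of the identity leaves the off-diagonal entries, hence both coherence measures,
unchanged, and scaling by `1 - η` multiplies them by `1 - η` and `(1 - η)²`. The off-diagonal
entries of `ψψ†` have moduli `|ψ_i||ψ_j|`, so `C_{l1}(ψψ†) = (Σ|ψ_i|)² - Σ|ψ_i|²` and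
`C_{l2}(ψψ†) = (Σ|ψ_i|²)² - Σ|ψ_i|⁴`. For the GHZ vector only the two entries of modulus `1/√2`
contribute, giving `C_{l1} = 1 - η` and `C_{l2} = (1 - η)²/2`.
-/

theorem Fintype.sum_offDiag_eq_sub {ι M : Type*} [Fintype ι] [DecidableEq ι]
    [AddCommGroup M] (f : ι → ι → M) :
    ∑ i, ∑ j, (if i = j then 0 else f i j) = ∑ i, ∑ j, f i j - ∑ i, f i i := by
  rw [← Finset.sum_sub_distrib]
  refine Finset.sum_congr rfl fun i _ => ?_
  simp only [Finset.sum_ite, Finset.sum_const_zero, zero_add, ← ne_eq, Finset.filter_ne,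
    Finset.sum_erase_eq_sub (Finset.mem_univ i)]

section

variable {d : ℕ}

theorem Cl1_add_of_isDiag (A : Matrix (Fin d) (Fin d) ℂ) {B : Matrix (Fin d) (Fin d) ℂ}
    (hB : B.IsDiag) : Cl1 (A + B) = Cl1 A := by
  unfold Cl1
  refine Finset.sum_congr rfl fun i _ => Finset.sum_congr rfl fun j _ => ?_
  split_ifs with h
  · rfl
  · rw [Matrix.add_apply, hB h, add_zero]

theorem Cl2_add_of_isDiag (A : Matrix (Fin d) (Fin d) ℂ) {B : Matrix (Fin d) (Fin d) ℂ}
    (hB : B.IsDiag) : Cl2 (A + B) = Cl2 A := by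
  unfold Cl2
  refine Finset.sum_congr rfl fun i _ => Finset.sum_congr rfl fun j _ => ?_
  split_ifs with h
  · rfl
  · rw [Matrix.add_apply, hB h, add_zero]

theorem Cl1_smul (c : ℂ) (A : Matrix (Fin d) (Fin d) ℂ) : Cl1 (c • A) = ‖c‖ * Cl1 A := by
  simp only [Cl1, Finset.mul_sum, mul_ite, mul_zero, Matrix.smul_apply, smul_eq_mul, norm_mul]

theorem Cl2_smul (c : ℂ) (A : Matrix (Fin d) (Fin d) ℂ) : Cl2 (c • A) = ‖c‖ ^ 2 * Cl2 A := by
  simp only [Cl2, Finset.mul_sum, mul_ite, mul_zero, Matrix.smul_apply, smul_eq_mul,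
    norm_mul, mul_pow]

theorem Cl1_vecMulVec_star (ψ : Fin d → ℂ) :
    Cl1 (vecMulVec ψ (star ψ)) = (∑ i, ‖ψ i‖) ^ 2 - ∑ i, ‖ψ i‖ ^ 2 := by
  simp only [Cl1, vecMulVec_apply, Pi.star_apply, norm_mul, norm_star,
    Fintype.sum_offDiag_eq_sub, sq, Finset.sum_mul_sum]

theorem Cl2_vecMulVec_star (ψ : Fin d → ℂ) :
    Cl2 (vecMulVec ψ (star ψ)) = (∑ i, ‖ψ i‖ ^ 2) ^ 2 - ∑ i, (‖ψ i‖ ^ 2) ^ 2 := by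
  simp only [Cl2, vecMulVec_apply, Pi.star_apply, norm_mul, norm_star, mul_pow,
    Fintype.sum_offDiag_eq_sub, sq (∑ i, _), Finset.sum_mul_sum]
  simp only [← sq]

theorem Cl1_vecMulVec_star_of_support {ψ : Fin d → ℂ} {a b : Fin d} (hab : a ≠ b)
    (hz : ∀ i, i ≠ a → i ≠ b → ψ i = 0) :
    Cl1 (vecMulVec ψ (star ψ)) = 2 * ‖ψ a‖ * ‖ψ b‖ := by
  have hsum (f : ℂ → ℝ) (hf : f 0 = 0) : ∑ i, f (ψ i) = f (ψ a) + f (ψ b) :=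
    Fintype.sum_eq_add a b hab fun i ⟨ha, hb⟩ => by rw [hz i ha hb, hf]
  rw [Cl1_vecMulVec_star, hsum _ norm_zero, hsum (‖·‖ ^ 2) (by simp)]
  ring

theorem Cl2_vecMulVec_star_of_support {ψ : Fin d → ℂ} {a b : Fin d} (hab : a ≠ b)
    (hz : ∀ i, i ≠ a → i ≠ b → ψ i = 0) :
    Cl2 (vecMulVec ψ (star ψ)) = 2 * ‖ψ a‖ ^ 2 * ‖ψ b‖ ^ 2 := by
  have hsum (f : ℂ → ℝ) (hf : f 0 = 0) : ∑ i, f (ψ i) = f (ψ a) + f (ψ b) :=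
    Fintype.sum_eq_add a b hab fun i ⟨ha, hb⟩ => by rw [hz i ha hb, hf]
  rw [Cl2_vecMulVec_star, hsum (‖·‖ ^ 2) (by simp), hsum (fun z => (‖z‖ ^ 2) ^ 2) (by simp)]
  ring

theorem norm_one_div_sqrt_two_sq : ‖1 / (Real.sqrt 2 : ℂ)‖ ^ 2 = 1 / 2 := by
  rw [one_div, norm_inv, Complex.norm_real, Real.norm_of_nonneg (Real.sqrt_nonneg 2), inv_pow,
    Real.sq_sqrt zero_le_two, one_div]

end

/-- For the noisy GHZ state `ρ_η = (1−η)·ψψ† + (η/d)·I`, one has `C_{l2}(ρ_η) = (1−η)²/2`,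
and consequently the spectrum-estimation lower bound `√(2·C_{l2})` for the `l1`-norm of
coherence is tight: `√(2·C_{l2}(ρ_η)) = C_{l1}(ρ_η)`. -/
theorem noisy_ghz_Cl2_tight (d : ℕ) (hd : 2 ≤ d) (ψ : Fin d → ℂ)
    (h0 : ψ ⟨0, by omega⟩ = 1 / (Real.sqrt 2 : ℂ))
    (h1 : ψ ⟨d - 1, by omega⟩ = 1 / (Real.sqrt 2 : ℂ))
    (hz : ∀ i : Fin d, i ≠ ⟨0, by omega⟩ → i ≠ ⟨d - 1, by omega⟩ → ψ i = 0)
    (η : ℝ) (hη1 : η ≤ 1) :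
    Cl2 (((1 - η : ℝ) : ℂ) • Matrix.vecMulVec ψ (star ψ) +
        ((η / d : ℝ) : ℂ) • (1 : Matrix (Fin d) (Fin d) ℂ)) = (1 - η) ^ 2 / 2 ∧
    Real.sqrt (2 * Cl2 (((1 - η : ℝ) : ℂ) • Matrix.vecMulVec ψ (star ψ) +
        ((η / d : ℝ) : ℂ) • (1 : Matrix (Fin d) (Fin d) ℂ))) =
      Cl1 (((1 - η : ℝ) : ℂ) • Matrix.vecMulVec ψ (star ψ) +
        ((η / d : ℝ) : ℂ) • (1 : Matrix (Fin d) (Fin d) ℂ)) := by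
  have hab : (⟨0, by omega⟩ : Fin d) ≠ ⟨d - 1, by omega⟩ := by
    rw [ne_eq, Fin.mk.injEq]
    omega
  have hx := norm_one_div_sqrt_two_sq
  have hc : ‖((1 - η : ℝ) : ℂ)‖ = 1 - η := by
    rw [Complex.norm_real, Real.norm_of_nonneg (sub_nonneg.2 hη1)]
  have hCl1 : Cl1 (((1 - η : ℝ) : ℂ) • vecMulVec ψ (star ψ) +
      ((η / d : ℝ) : ℂ) • (1 : Matrix (Fin d) (Fin d) ℂ)) = 1 - η := by
    rw [Cl1_add_of_isDiag _ (isDiag_smul_one _ _), Cl1_smul, hc,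
      Cl1_vecMulVec_star_of_support hab hz, h0, h1, mul_assoc, ← sq, hx]
    ring
  have hCl2 : Cl2 (((1 - η : ℝ) : ℂ) • vecMulVec ψ (star ψ) +
      ((η / d : ℝ) : ℂ) • (1 : Matrix (Fin d) (Fin d) ℂ)) = (1 - η) ^ 2 / 2 := by
    rw [Cl2_add_of_isDiag _ (isDiag_smul_one _ _), Cl2_smul, hc,
      Cl2_vecMulVec_star_of_support hab hz, h0, h1, hx]
    ring
  refine ⟨hCl2, ?_⟩
  rw [hCl2, hCl1, mul_div_cancel₀ _ two_ne_zero, Real.sqrt_sq (sub_nonneg.2 hη1)]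
end

section
/- Let N be a positive natural number and let u be a real number with 0 < u and N·u ≥ 1. Then the minimum of Σ_{k=1}^N √(v_k), taken over all v : {1,…,N} → ℝ with 0 ≤ v_k ≤ u for every k and Σ_{k=1}^N v_k = 1, equals M·√u + √(1 − M·u), where M = ⌊1/u⌋ is the largest integer with M·u ≤ 1. (This is the value of the spectrum-estimation optimization problem when all the caps u_k are equal, as occurs for noisy linear cluster states.) -/
/-!
Write the total mass as `m * u + r` with `m : ℕ` and `0 ≤ r ≤ u`; then `m * √u + √r` bounds
`∑ √(v k)` from below for every `v` with entries in `[0, u]`. Peel off one entry `a`: if `a ≤ r`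
it is taken from the remainder, and `√r ≤ √a + √(r - a)`; otherwise it is taken from a full cap,
and concavity of `√` gives `√u + √r ≤ √a + √(u + r - a)`. The greedy vector `(u, …, u, r, 0, …)`
attains the bound, and `m = ⌊1 / u⌋` for total mass `1`.
-/

open Finset

theorem Real.sqrt_add_le_add_sqrt {x y : ℝ} (hx : 0 ≤ x) (hy : 0 ≤ y) :
    √(x + y) ≤ √x + √y := by
  rw [Real.sqrt_le_iff]
  refine ⟨by positivity, ?_⟩
  nlinarith [Real.sq_sqrt hx, Real.sq_sqrt hy, mul_nonneg (Real.sqrt_nonneg x) (Real.sqrt_nonneg y)]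

theorem Real.sqrt_add_sqrt_le_sqrt_add_sqrt_add_sub {r a u : ℝ} (hr : 0 ≤ r) (hra : r ≤ a)
    (hau : a ≤ u) : √u + √r ≤ √a + √(u + r - a) := by
  have hu2 := Real.sq_sqrt (hr.trans (hra.trans hau))
  have ha2 := Real.sq_sqrt (hr.trans hra)
  have hr2 := Real.sq_sqrt hr
  have hb2 := Real.sq_sqrt (show 0 ≤ u + r - a by linarith)
  have hau' : √a ≤ √u := Real.sqrt_le_sqrt hau
  have hra' : √r ≤ √a := Real.sqrt_le_sqrt hra
  have hrb : √r ≤ √(u + r - a) := Real.sqrt_le_sqrt (by linarith)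
  have hbu : √(u + r - a) ≤ √u := Real.sqrt_le_sqrt (by linarith)
  nlinarith [Real.sqrt_nonneg r]

theorem mul_sqrt_eq_zero_of_mul_eq_zero {c u : ℝ} (h : c * u = 0) : c * √u = 0 := by
  rcases mul_eq_zero.mp h with h | h <;> simp [h]

section EqualCaps

variable {u : ℝ}

theorem nat_mul_sqrt_add_sqrt_le_sum_sqrt (hu : 0 ≤ u) {N : ℕ} (v : Fin N → ℝ)
    (hv : ∀ k, 0 ≤ v k ∧ v k ≤ u) {m : ℕ} {r : ℝ} (hr : 0 ≤ r) (hru : r ≤ u)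
    (hsum : ∑ k, v k = m * u + r) : m * √u + √r ≤ ∑ k, √(v k) := by
  induction N generalizing m r with
  | zero =>
    simp only [univ_eq_empty, sum_empty] at hsum ⊢
    have hmu : (m : ℝ) * u = 0 := by nlinarith [m.cast_nonneg (α := ℝ)]
    have hr0 : r = 0 := by nlinarith [m.cast_nonneg (α := ℝ)]
    simp [mul_sqrt_eq_zero_of_mul_eq_zero hmu, hr0]
  | succ N ih =>
    rw [Fin.sum_univ_succ] at hsum ⊢
    have ha := hv 0
    have htail : 0 ≤ ∑ k : Fin N, v k.succ := sum_nonneg fun k _ => (hv k.succ).1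
    have ih_tail := fun m r => ih (fun k => v k.succ) (fun k => hv k.succ) (m := m) (r := r)
    rcases le_or_gt (v 0) r with h_le_rem | h_gt_rem
    · have := ih_tail m (r - v 0) (by linarith) (by linarith) (by linarith)
      have := Real.sqrt_add_le_add_sqrt ha.1 (show 0 ≤ r - v 0 by linarith)
      rw [add_sub_cancel] at this
      linarith
    · obtain _ | m := m
      · simp only [Nat.cast_zero, zero_mul, zero_add] at hsum
        linarith
      · have := ih_tail m (u + r - v 0) (by linarith) (by linarith)
          (by push_cast at hsum; linarith)
        have := Real.sqrt_add_sqrt_le_sqrt_add_sqrt_add_sub hr h_gt_rem.le ha.2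
        push_cast
        linarith

theorem exists_capped_sum_eq_and_sum_sqrt_eq (hu : 0 ≤ u) {N m : ℕ} {r : ℝ} (hr : 0 ≤ r)
    (hru : r ≤ u) (hN : m * u + r ≤ N * u) :
    ∃ v : Fin N → ℝ, (∀ k, 0 ≤ v k ∧ v k ≤ u) ∧ ∑ k, v k = m * u + r ∧
      ∑ k, √(v k) = m * √u + √r := by
  induction N generalizing m with
  | zero =>
    simp only [CharP.cast_eq_zero, zero_mul] at hN
    have hmu : (m : ℝ) * u = 0 := by nlinarith [m.cast_nonneg (α := ℝ)]
    have hr0 : r = 0 := by nlinarith [m.cast_nonneg (α := ℝ)]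
    refine ⟨Fin.elim0, fun k => k.elim0, ?_, ?_⟩ <;>
      simp [hmu, mul_sqrt_eq_zero_of_mul_eq_zero hmu, hr0]
  | succ N ih =>
    obtain _ | m := m
    · refine ⟨Fin.cons r 0, Fin.cases ⟨hr, hru⟩ fun _ => ⟨le_rfl, hu⟩, ?_, ?_⟩ <;>
        simp [Fin.sum_univ_succ]
    · obtain ⟨w, hw, hw_sum, hw_sqrt⟩ := ih (m := m) (by push_cast at hN; linarith)
      refine ⟨Fin.cons u w, Fin.cases ⟨hu, le_rfl⟩ hw, ?_, ?_⟩ <;>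
        simp only [Fin.sum_univ_succ, Fin.cons_zero, Fin.cons_succ, hw_sum, hw_sqrt] <;>
        push_cast <;> ring

end EqualCaps

theorem sqrt_sum_min_equal_caps_general (N : ℕ) (u : ℝ) (hu : 0 < u)
    (hNu : 1 ≤ (N : ℝ) * u) :
    IsLeast
      {t : ℝ | ∃ v : Fin N → ℝ, (∀ k, 0 ≤ v k ∧ v k ≤ u) ∧ (∑ k, v k) = 1 ∧
        t = ∑ k, Real.sqrt (v k)}
      ((⌊1 / u⌋ : ℝ) * Real.sqrt u + Real.sqrt (1 - (⌊1 / u⌋ : ℝ) * u)) := by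
  set m := ⌊1 / u⌋₊
  have hm : ((⌊1 / u⌋ : ℤ) : ℝ) = m := (natCast_floor_eq_intCast_floor (by positivity)).symm
  have hmu : m * u ≤ 1 := (le_div_iff₀ hu).mp (Nat.floor_le (by positivity))
  have hum : 1 < (m + 1) * u := (div_lt_iff₀ hu).mp (Nat.lt_floor_add_one _)
  rw [hm]
  constructor
  · obtain ⟨v, hv, hsum, hsqrt⟩ := exists_capped_sum_eq_and_sum_sqrt_eq hu.le
      (by linarith : 0 ≤ 1 - m * u) (by linarith) (by linarith : m * u + (1 - m * u) ≤ N * u)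
    exact ⟨v, hv, by rw [hsum]; ring, hsqrt.symm⟩
  · rintro t ⟨v, hv, hsum, rfl⟩
    exact nat_mul_sqrt_add_sqrt_le_sum_sqrt hu.le v hv (by linarith) (by linarith)
      (by rw [hsum]; ring)

/-- The value of the spectrum-estimation optimization problem when all the caps are equal:
for `0 < u` with `N·u ≥ 1`, the minimum of `∑ √(v_k)` over `v : Fin N → ℝ` with
`0 ≤ v_k ≤ u` and `∑ v_k = 1` equals `M·√u + √(1 − M·u)` where `M = ⌊1/u⌋`. -/
theorem sqrt_sum_min_equal_caps (N : ℕ) (hN : 0 < N) (u : ℝ) (hu : 0 < u)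
    (hNu : 1 ≤ (N : ℝ) * u) :
    IsLeast
      {t : ℝ | ∃ v : Fin N → ℝ, (∀ k, 0 ≤ v k ∧ v k ≤ u) ∧ (∑ k, v k) = 1 ∧
        t = ∑ k, Real.sqrt (v k)}
      ((⌊1 / u⌋ : ℝ) * Real.sqrt u + Real.sqrt (1 - (⌊1 / u⌋ : ℝ) * u)) :=
  sqrt_sum_min_equal_caps_general N u hu hNu
end
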